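/- arXiv:2211.13313 — 6 statements merged into one kernel-verified Lean document; each statement's English description precedes it below -/
import Mathlib

section
/- Let D be a graph database, A an automaton, and w a walk in D that is the projection of some run in D×A. Then w admits a decomposition w = u_1 v_1 u_2 v_2 ⋯ v_n u_{n+1}, where each u_i is a (possibly trivial) closed walk (src(u_i) = tgt(u_i)), and the concatenation v_1 v_2 ⋯ v_n is the projection of a simple run of D×A (i.e., a run that repeats no vertex of D×A). -/
structure GraphDB (σ V E : Type) where
  src : E → V
  tgt : E → V
  lbl : E → Set σ

inductive GraphDB.IsWalkFrom {σ V E : Type} (D : GraphDB σ V E) : V → List E → V → Prop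
  | nil (v : V) : D.IsWalkFrom v [] v
  | cons {v u t : V} {e : E} {es : List E} :
      D.src e = v → D.tgt e = u → D.IsWalkFrom u es t → D.IsWalkFrom v (e :: es) t

/-- The list of vertices visited by a walk starting at `s` with edge list `es`. -/
def GraphDB.walkVertices {σ V E : Type} (D : GraphDB σ V E) (s : V) (es : List E) : List V :=
  s :: es.map D.tgt

/-- `w` is one of the label words of the walk with edges `es`. -/
def GraphDB.WalkLabel {σ V E : Type} (D : GraphDB σ V E) (es : List E) (w : List σ) : Prop :=
  List.Forall₂ (fun a e => a ∈ D.lbl e) w es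

structure Auto (σ Q : Type) where
  Δ : Set (Q × σ × Q)
  I : Set Q
  F : Set Q

inductive Auto.IsComp {σ Q : Type} (A : Auto σ Q) : Q → List σ → Q → Prop
  | nil (q : Q) : A.IsComp q [] q
  | cons {q q' t : Q} {a : σ} {w : List σ} :
      (q, a, q') ∈ A.Δ → A.IsComp q' w t → A.IsComp q (a :: w) t

def Auto.Accepts {σ Q : Type} (A : Auto σ Q) (w : List σ) : Prop :=
  ∃ i ∈ A.I, ∃ f ∈ A.F, A.IsComp i w f

/-- Edges of the product (run) database `D × A`. -/
def ProdEdge {σ V E Q : Type} (D : GraphDB σ V E) (A : Auto σ Q) : Type :=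
  { p : E × (Q × σ × Q) // p.2 ∈ A.Δ ∧ p.2.2.1 ∈ D.lbl p.1 }

/-- The product (run) database `D × A`. -/
def prodDB {σ V E Q : Type} (D : GraphDB σ V E) (A : Auto σ Q) :
    GraphDB σ (V × Q) (ProdEdge D A) where
  src p := (D.src p.1.1, p.1.2.1)
  tgt p := (D.tgt p.1.1, p.1.2.2.2)
  lbl p := {p.1.2.2.1}

/-- A run: a walk of `D × A` from `V × I` to `V × F`. -/
def IsRun {σ V E Q : Type} (D : GraphDB σ V E) (A : Auto σ Q)
    (p : V × Q) (es : List (ProdEdge D A)) (q : V × Q) : Prop :=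
  (prodDB D A).IsWalkFrom p es q ∧ p.2 ∈ A.I ∧ q.2 ∈ A.F

/-- A walk is simple if it repeats no vertex. -/
def IsSimple {σ V E : Type} (D : GraphDB σ V E) (s : V) (es : List E) : Prop :=
  (D.walkVertices s es).Nodup

/-- Projection of product edges to edges of `D`. -/
def projEdges {σ V E Q : Type} {D : GraphDB σ V E} {A : Auto σ Q}
    (es : List (ProdEdge D A)) : List E := es.map (fun p => p.1.1)

/-- Membership in the simple-run semantics `⟦A⟧_SR(D)`:
the walk `(s, es, t)` is the projection of some simple run of `D × A`. -/
def InSR {σ V E Q : Type} (D : GraphDB σ V E) (A : Auto σ Q)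
    (s : V) (es : List E) (t : V) : Prop :=
  ∃ (i f : Q) (r : List (ProdEdge D A)),
    IsRun D A (s, i) r (t, f) ∧ IsSimple (prodDB D A) (s, i) r ∧ projEdges r = es

/-
Loop erasure. If a walk returns to its start vertex `x`, cut it at the last return: the prefix is a
closed walk, and the rest leaves `x` by its first edge and never comes back, so prepending that edge
to a loop-erased version of the rest keeps it simple. Done in `D × A`, the closed walks project to
closed walks of `D`, and the loop-erased run is a simple run with the same endpoints.
-/

variable {σ V E Q : Type}

section Interleave

variable {α β : Type} {n : ℕ}

def interleave (u : Fin (n + 1) → List α) (v : Fin n → List α) : List α :=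
  (List.ofFn fun i : Fin n => u i.castSucc ++ v i).flatten ++ u (Fin.last n)

@[simp]
lemma interleave_zero (u : Fin 1 → List α) (v : Fin 0 → List α) : interleave u v = u 0 := by
  simp [interleave]

@[simp]
lemma interleave_cons (x y : List α) (u : Fin (n + 1) → List α) (v : Fin n → List α) :
    interleave (Fin.cons x u) (Fin.cons y v) = x ++ y ++ interleave u v := by
  simp [interleave, List.ofFn_succ, Fin.cons_succ, ← Fin.succ_last]

lemma map_interleave (f : α → β) (u : Fin (n + 1) → List α) (v : Fin n → List α) :
    (interleave u v).map f = interleave (fun i => (u i).map f) (fun i => (v i).map f) := by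
  simp [interleave, List.map_flatten, List.map_ofFn, Function.comp_def]

lemma flatten_ofFn_subset_interleave (u : Fin (n + 1) → List α) (v : Fin n → List α) :
    (List.ofFn v).flatten ⊆ interleave u v := by
  intro x hx
  simp only [List.mem_flatten, List.mem_ofFn, interleave, List.mem_append] at hx ⊢
  obtain ⟨_, ⟨i, rfl⟩, hx⟩ := hx
  exact Or.inl ⟨_, ⟨i, rfl⟩, List.mem_append.2 (Or.inr hx)⟩

end Interleave

namespace GraphDB

variable {G : GraphDB σ V E}

lemma IsWalkFrom.split_last {x y : V} {r : List E} (h : G.IsWalkFrom x r y) (p : V) :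
    p ∉ r.map G.tgt ∨
      ∃ c r', r = c ++ r' ∧ G.IsWalkFrom x c p ∧ G.IsWalkFrom p r' y ∧ p ∉ r'.map G.tgt := by
  induction h with
  | nil => simp
  | @cons x u y e es hs ht hes ih =>
    rcases ih with hp | ⟨c, r', rfl, hc, hr', hp⟩
    · by_cases he : u = p
      · subst he
        exact .inr ⟨[e], es, rfl, .cons hs ht (.nil _), hes, hp⟩
      · left
        simp [ht, Ne.symm he, hp]
    · exact .inr ⟨e :: c, r', rfl, .cons hs ht hc, hr', hp⟩

lemma IsWalkFrom.exists_closed_prefix {x y : V} {r : List E} (h : G.IsWalkFrom x r y) :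
    ∃ c r', r = c ++ r' ∧ G.IsWalkFrom x c x ∧ G.IsWalkFrom x r' y ∧ x ∉ r'.map G.tgt := by
  rcases h.split_last x with hx | hsplit
  · exact ⟨[], r, rfl, .nil x, h, hx⟩
  · exact hsplit

theorem IsWalkFrom.exists_interleave_closed_simple {x y : V} {r : List E}
    (h : G.IsWalkFrom x r y) :
    ∃ (n : ℕ) (c : Fin (n + 1) → List E) (v : Fin n → List E) (a : Fin (n + 1) → V),
      r = interleave c v ∧ (∀ i, G.IsWalkFrom (a i) (c i) (a i)) ∧
      G.IsWalkFrom x (List.ofFn v).flatten y ∧ IsSimple G x (List.ofFn v).flatten := by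
  obtain ⟨c, r', rfl, hc, hr', hx⟩ := h.exists_closed_prefix
  cases hr' with
  | nil =>
    exact ⟨0, fun _ => c, Fin.elim0, fun _ => x, by simp, fun _ => hc, by simpa using .nil x,
      by simp [IsSimple, walkVertices]⟩
  | @cons _ _ _ e r'' hs ht hr'' =>
    subst ht
    have : r''.length < (c ++ e :: r'').length := by simp only [List.length_append, List.length_cons]; omega
    obtain ⟨n, c', v, a, rfl, hc', hv, hsimp⟩ := hr''.exists_interleave_closed_simple
    have hxv : x ∉ G.walkVertices (G.tgt e) (List.ofFn v).flatten := by
      simp only [List.map_cons, List.mem_cons, not_or] at hx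
      simp only [walkVertices, List.mem_cons, not_or]
      exact ⟨hx.1, fun hmem => hx.2 (List.map_subset _ (flatten_ofFn_subset_interleave c' v) hmem)⟩
    have hflat : (List.ofFn (Fin.cons [e] v : Fin (n + 1) → List E)).flatten =
        e :: (List.ofFn v).flatten := by
      simp
    refine ⟨n + 1, Fin.cons c c', Fin.cons [e] v, Fin.cons x a, by simp, Fin.cases hc hc', ?_, ?_⟩
    · rw [hflat]
      exact .cons hs rfl hv
    · rw [IsSimple, hflat, walkVertices, List.map_cons, List.nodup_cons]
      exact ⟨hxv, hsimp⟩
termination_by r.length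

lemma IsWalkFrom.projEdges {D : GraphDB σ V E} {A : Auto σ Q} {p q : V × Q}
    {r : List (ProdEdge D A)} (h : (prodDB D A).IsWalkFrom p r q) :
    D.IsWalkFrom p.1 (projEdges r) q.1 := by
  induction h with
  | nil => exact .nil _
  | cons hs ht _ ih => exact .cons (congrArg Prod.fst hs) (congrArg Prod.fst ht) ih

end GraphDB

theorem stmt_1_general {σ V E Q : Type} (D : GraphDB σ V E) (A : Auto σ Q)
    (s t : V) (es : List E)
    (hr : ∃ (i f : Q) (r : List (ProdEdge D A)),
        IsRun D A (s, i) r (t, f) ∧ projEdges r = es) :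
    ∃ (n : ℕ) (u : Fin (n + 1) → List E) (v : Fin n → List E) (a : Fin (n + 1) → V),
      es = (List.ofFn (fun i : Fin n => u i.castSucc ++ v i)).flatten ++ u (Fin.last n) ∧
      (∀ i, D.IsWalkFrom (a i) (u i) (a i)) ∧
      D.IsWalkFrom s (List.ofFn v).flatten t ∧
      InSR D A s (List.ofFn v).flatten t := by
  obtain ⟨i, f, r, ⟨hwr, hi, hf⟩, rfl⟩ := hr
  obtain ⟨n, c, v, a, rfl, hc, hv, hsimp⟩ := hwr.exists_interleave_closed_simple
  have hproj : (List.ofFn fun j => projEdges (v j)).flatten = projEdges (List.ofFn v).flatten := by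
    simp [projEdges, List.map_flatten, List.map_ofFn, Function.comp_def]
  refine ⟨n, fun j => projEdges (c j), fun j => projEdges (v j), fun j => (a j).1,
    map_interleave _ c v, fun j => (hc j).projEdges, ?_, i, f, _, ⟨hv, hi, hf⟩, hsimp, hproj.symm⟩
  rw [hproj]
  exact hv.projEdges

/-- a matched walk decomposes as `u₁ v₁ u₂ ⋯ vₙ u_{n+1}` with the `uᵢ`
closed walks and `v₁ ⋯ vₙ` the projection of a simple run. -/
theorem stmt_1 {σ V E Q : Type} (D : GraphDB σ V E) (A : Auto σ Q)
    (s t : V) (es : List E) (hw : D.IsWalkFrom s es t)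
    (hr : ∃ (i f : Q) (r : List (ProdEdge D A)),
        IsRun D A (s, i) r (t, f) ∧ projEdges r = es) :
    ∃ (n : ℕ) (u : Fin (n + 1) → List E) (v : Fin n → List E) (a : Fin (n + 1) → V),
      es = (List.ofFn (fun i : Fin n => u i.castSucc ++ v i)).flatten ++ u (Fin.last n) ∧
      (∀ i, D.IsWalkFrom (a i) (u i) (a i)) ∧
      D.IsWalkFrom s (List.ofFn v).flatten t ∧
      InSR D A s (List.ofFn v).flatten t :=
  stmt_1_general D A s t es hr
end

section
/- Suppose B is a topological coding of A with encoding words u_i, u_f and letter encoding λ. Then for every word u over the alphabet of A, u is accepted by A if and only if the word u_i · λ(u) · u_f is accepted by B, where λ is extended to words by concatenation. -/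
/-- A computation recorded as a starting state and a list of `(letter, next state)` steps. -/
abbrev Steps (σ Q : Type) := List (σ × Q)

inductive Auto.IsCompS {σ Q : Type} (A : Auto σ Q) : Q → Steps σ Q → Q → Prop
  | nil (q : Q) : A.IsCompS q [] q
  | cons {q q' t : Q} {a : σ} {l : Steps σ Q} :
      (q, a, q') ∈ A.Δ → A.IsCompS q' l t → A.IsCompS q ((a, q') :: l) t

/-- Target of a computation. -/
def compTgt {σ Q : Type} (q : Q) (l : Steps σ Q) : Q := l.foldl (fun _ s => s.2) q

/-- Label of a computation. -/
def stepLabel {σ Q : Type} (l : Steps σ Q) : List σ := l.map Prod.fst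

/-- Internal states of a computation: all visited states except the first and the last. -/
def internalStates {σ Q : Type} (l : Steps σ Q) : List Q := (l.map Prod.snd).dropLast

/-- The transitions used by a computation. -/
def compTrans {σ Q : Type} : Q → Steps σ Q → List (Q × σ × Q)
  | _, [] => []
  | q, (a, q') :: l => (q, a, q') :: compTrans q' l

/-- Acceptance of a word. -/
def Auto.AcceptsS {σ Q : Type} (A : Auto σ Q) (w : List σ) : Prop :=
  ∃ i ∈ A.I, ∃ (l : Steps σ Q) (t : Q), A.IsCompS i l t ∧ stepLabel l = w ∧ t ∈ A.F

/-- `B` is a topological (out-)coding of `A`. -/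
structure TopCoding {σA QA σB QB : Type} (A : Auto σA QA) (B : Auto σB QB) where
  ui : List σB
  uf : List σB
  lam : σA → List σB
  lam_ne : ∀ a, lam a ≠ []
  lam_inj : Function.Injective lam
  nu : QA → QB
  nu_inj : Function.Injective nu
  etaI : QA → QB × Steps σB QB
  eta : QA × σA × QA → QB × Steps σB QB
  etaF : QA → QB × Steps σB QB
  -- (d) η_i is a bijection from the initial states of A onto W_B^initial
  etaI_init : ∀ s ∈ A.I, (etaI s).1 ∈ B.I
  etaI_lbl : ∀ s ∈ A.I, stepLabel (etaI s).2 = ui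
  etaI_comp : ∀ s ∈ A.I, B.IsCompS (etaI s).1 (etaI s).2 (nu s)
  etaI_nonlast : ∀ s ∈ A.I,
      ∀ x ∈ ((etaI s).1 :: (etaI s).2.map Prod.snd).dropLast, x ∉ Set.range nu
  etaI_inj : ∀ s ∈ A.I, ∀ s' ∈ A.I, etaI s = etaI s' → s = s'
  etaI_surj : ∀ c : QB × Steps σB QB, c.1 ∈ B.I → (∃ t, B.IsCompS c.1 c.2 t) →
      stepLabel c.2 = ui → ∃ s ∈ A.I, etaI s = c
  -- (e) η is a bijection from the transitions of A onto W_B^transition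
  eta_start : ∀ e ∈ A.Δ, (eta e).1 = nu e.1
  eta_lbl : ∀ e ∈ A.Δ, stepLabel (eta e).2 = lam e.2.1
  eta_comp : ∀ e ∈ A.Δ, B.IsCompS (eta e).1 (eta e).2 (nu e.2.2)
  eta_internal : ∀ e ∈ A.Δ, ∀ x ∈ internalStates (eta e).2, x ∉ Set.range nu
  eta_inj : ∀ e ∈ A.Δ, ∀ e' ∈ A.Δ, eta e = eta e' → e = e'
  eta_surj : ∀ c : QB × Steps σB QB, c.1 ∈ Set.range nu → (∃ t, B.IsCompS c.1 c.2 t) →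
      stepLabel c.2 ∈ Set.range lam → ∃ e ∈ A.Δ, eta e = c
  -- (f) η_f is a bijection from the final states of A onto W_B^final
  etaF_start : ∀ s ∈ A.F, (etaF s).1 = nu s
  etaF_lbl : ∀ s ∈ A.F, stepLabel (etaF s).2 = uf
  etaF_comp : ∀ s ∈ A.F, B.IsCompS (etaF s).1 (etaF s).2 (compTgt (etaF s).1 (etaF s).2)
  etaF_final : ∀ s ∈ A.F, compTgt (etaF s).1 (etaF s).2 ∈ B.F
  etaF_nonfirst : ∀ s ∈ A.F, ∀ x ∈ (etaF s).2.map Prod.snd, x ∉ Set.range nu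
  etaF_inj : ∀ s ∈ A.F, ∀ s' ∈ A.F, etaF s = etaF s' → s = s'
  etaF_surj : ∀ c : QB × Steps σB QB, c.1 ∈ Set.range nu → (∃ t, B.IsCompS c.1 c.2 t) →
      stepLabel c.2 = uf → ∃ s ∈ A.F, etaF s = c
  -- (g) distinct selected computations share no transition nor internal state
  disjoint : ∀ c1 ∈ (etaI '' A.I ∪ eta '' A.Δ ∪ etaF '' A.F),
      ∀ c2 ∈ (etaI '' A.I ∪ eta '' A.Δ ∪ etaF '' A.F),
      ((∃ τ, τ ∈ compTrans c1.1 c1.2 ∧ τ ∈ compTrans c2.1 c2.2) ∨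
       (∃ x, x ∈ internalStates c1.2 ∧ x ∈ internalStates c2.2)) → c1 = c2

/-!
Encoding: each transition `(s, a, t)` of `A` is replaced by its selected computation of `B`,
labelled `λ(a)` from `ν s` to `ν t`, and the run is framed by the selected computations
labelled `u_i` and `u_f`. Decoding: split a successful computation of `B` along the
factorisation `u_i · λ(a₁) ⋯ λ(aₙ) · u_f`; by surjectivity of `η_i`, `η`, `η_f` every piece is a
selected computation, and injectivity of `λ` and `ν` reads off the letters and states of `A`.
Since a computation of `B` determines its target, consecutive pieces glue at `ν`-images.
-/

namespace Auto

variable {σ Q : Type} (A : Auto σ Q)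

def Reads (p : Q) (w : List σ) (q : Q) : Prop :=
  ∃ l : Steps σ Q, A.IsCompS p l q ∧ stepLabel l = w

variable {A}

theorem IsCompS.target_unique {p q q' : Q} {l : Steps σ Q}
    (h : A.IsCompS p l q) (h' : A.IsCompS p l q') : q = q' := by
  induction h with
  | nil => cases h'; rfl
  | cons _ _ ih => cases h' with | cons _ h' => exact ih h'

theorem reads_nil {p q : Q} : A.Reads p [] q ↔ p = q := by
  constructor
  · rintro ⟨l, hl, hw⟩
    obtain rfl : l = [] := List.map_eq_nil_iff.mp hw
    cases hl
    rfl
  · rintro rfl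
    exact ⟨[], .nil p, rfl⟩

theorem reads_cons {p q : Q} {a : σ} {w : List σ} :
    A.Reads p (a :: w) q ↔ ∃ r, (p, a, r) ∈ A.Δ ∧ A.Reads r w q := by
  constructor
  · rintro ⟨_ | ⟨⟨b, r⟩, l⟩, hl, hw⟩
    · cases hw
    · obtain ⟨rfl, hlw⟩ := List.cons_eq_cons.mp (show b :: stepLabel l = a :: w from hw)
      cases hl with
      | cons hpr hl => exact ⟨r, hpr, l, hl, hlw⟩
  · rintro ⟨r, hpr, l, hl, rfl⟩
    exact ⟨(a, r) :: l, .cons hpr hl, rfl⟩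

theorem reads_append {p q : Q} {w₁ w₂ : List σ} :
    A.Reads p (w₁ ++ w₂) q ↔ ∃ r, A.Reads p w₁ r ∧ A.Reads r w₂ q := by
  induction w₁ generalizing p with
  | nil => simp [reads_nil]
  | cons a w₁ ih =>
    simp only [List.cons_append, reads_cons, ih]
    constructor
    · rintro ⟨r, hpr, s, hrs, hsq⟩
      exact ⟨s, ⟨r, hpr, hrs⟩, hsq⟩
    · rintro ⟨s, ⟨r, hpr, hrs⟩, hsq⟩
      exact ⟨r, hpr, s, hrs, hsq⟩

theorem acceptsS_iff {w : List σ} :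
    A.AcceptsS w ↔ ∃ i ∈ A.I, ∃ t ∈ A.F, A.Reads i w t := by
  constructor
  · rintro ⟨i, hi, l, t, hl, hw, ht⟩
    exact ⟨i, hi, t, ht, l, hl, hw⟩
  · rintro ⟨i, hi, t, ht, l, hl, hw⟩
    exact ⟨i, hi, l, t, hl, hw, ht⟩

end Auto

namespace TopCoding

variable {σA QA σB QB : Type} {A : Auto σA QA} {B : Auto σB QB} (T : TopCoding A B)

theorem encode_initial {s : QA} (hs : s ∈ A.I) : ∃ i ∈ B.I, B.Reads i T.ui (T.nu s) :=
  ⟨_, T.etaI_init s hs, _, T.etaI_comp s hs, T.etaI_lbl s hs⟩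

theorem encode_transition {s q : QA} {a : σA} (h : (s, a, q) ∈ A.Δ) :
    B.Reads (T.nu s) (T.lam a) (T.nu q) :=
  ⟨_, T.eta_start _ h ▸ T.eta_comp _ h, T.eta_lbl _ h⟩

theorem encode_final {s : QA} (hs : s ∈ A.F) : ∃ t ∈ B.F, B.Reads (T.nu s) T.uf t :=
  ⟨_, T.etaF_final s hs, _, T.etaF_start s hs ▸ T.etaF_comp s hs, T.etaF_lbl s hs⟩

theorem reads_encode {s t : QA} {u : List σA} (h : A.Reads s u t) :
    B.Reads (T.nu s) (u.map T.lam).flatten (T.nu t) := by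
  induction u generalizing s with
  | nil => exact Auto.reads_nil.mpr (congrArg T.nu (Auto.reads_nil.mp h))
  | cons a u ih =>
    obtain ⟨r, hsr, hrt⟩ := Auto.reads_cons.mp h
    exact Auto.reads_append.mpr ⟨T.nu r, T.encode_transition hsr, ih hrt⟩

theorem decode_initial {i m : QB} (hi : i ∈ B.I) (h : B.Reads i T.ui m) :
    ∃ s ∈ A.I, T.nu s = m := by
  obtain ⟨l, hl, hw⟩ := h
  obtain ⟨s, hs, hsl⟩ := T.etaI_surj (i, l) hi ⟨m, hl⟩ hw
  have hcomp := T.etaI_comp s hs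
  rw [hsl] at hcomp
  exact ⟨s, hs, hcomp.target_unique hl⟩

theorem decode_transition {s : QA} {a : σA} {m : QB} (h : B.Reads (T.nu s) (T.lam a) m) :
    ∃ q, (s, a, q) ∈ A.Δ ∧ T.nu q = m := by
  obtain ⟨l, hl, hw⟩ := h
  obtain ⟨⟨s', a', q⟩, he, hel⟩ := T.eta_surj (T.nu s, l) ⟨s, rfl⟩ ⟨m, hl⟩ ⟨a, hw.symm⟩
  have hs : s' = s := T.nu_inj (by simpa [hel] using (T.eta_start _ he).symm)
  have ha : a' = a := T.lam_inj (by simpa [hel, hw] using (T.eta_lbl _ he).symm)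
  subst hs ha
  have hcomp := T.eta_comp _ he
  rw [hel] at hcomp
  exact ⟨q, he, hcomp.target_unique hl⟩

theorem decode_final {s : QA} {t : QB} (h : B.Reads (T.nu s) T.uf t) : s ∈ A.F := by
  obtain ⟨l, hl, hw⟩ := h
  obtain ⟨s', hs', hsl⟩ := T.etaF_surj (T.nu s, l) ⟨s, rfl⟩ ⟨t, hl⟩ hw
  have hstart := T.etaF_start s' hs'
  rw [hsl] at hstart
  rwa [T.nu_inj hstart]

theorem reads_decode {s : QA} {m : QB} {u : List σA}
    (h : B.Reads (T.nu s) (u.map T.lam).flatten m) : ∃ t, A.Reads s u t ∧ T.nu t = m := by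
  induction u generalizing s with
  | nil => exact ⟨s, Auto.reads_nil.mpr rfl, Auto.reads_nil.mp h⟩
  | cons a u ih =>
    obtain ⟨r, hsr, hrm⟩ := Auto.reads_append.mp h
    obtain ⟨q, hsq, rfl⟩ := T.decode_transition hsr
    obtain ⟨t, hqt, rfl⟩ := ih hrm
    exact ⟨t, Auto.reads_cons.mpr ⟨q, hsq, hqt⟩, rfl⟩

end TopCoding

/-- `u` is accepted by `A` iff `u_i · λ(u) · u_f` is accepted by `B`. -/
theorem stmt_7 {σA QA σB QB : Type} {A : Auto σA QA} {B : Auto σB QB}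
    (T : TopCoding A B) :
    ∀ u : List σA,
      A.AcceptsS u ↔ B.AcceptsS (T.ui ++ (u.map T.lam).flatten ++ T.uf) := by
  intro u
  simp only [Auto.acceptsS_iff, Auto.reads_append]
  constructor
  · rintro ⟨s, hs, t, ht, hst⟩
    obtain ⟨i, hi, his⟩ := T.encode_initial hs
    obtain ⟨f, hf, htf⟩ := T.encode_final ht
    exact ⟨i, hi, f, hf, _, ⟨_, his, T.reads_encode hst⟩, htf⟩
  · rintro ⟨i, hi, f, -, _, ⟨_, him, hmm'⟩, hm'f⟩
    obtain ⟨s, hs, rfl⟩ := T.decode_initial hi him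
    obtain ⟨t, hst, rfl⟩ := T.reads_decode hmm'
    exact ⟨s, hs, t, T.decode_final hm'f, hst⟩
end

section
/- Let A = (Σ, Q, Δ, I, F) be a trim automaton with m = |Δ| transitions, let G : Δ → {1,…,m} be a bijection and H(e) = m + 1 − G(e). Define, over the alphabet Σ ⊎ {σ}, the expression R = ( Σ_{q∈Q} [ (ε_if_q∈I + Σ_{e=(s,a,q)∈Δ} a^{G(e)}) · σ · (ε_if_q∈F + Σ_{e=(q,a,t)∈Δ} a^{H(e)}) ] )^*. Then for every word u ∈ Σ^*, u ∈ L(A) if and only if σ · λ(u) ∈ L(R), where λ maps each letter a to a^{m+1}σ and is extended to words by concatenation. -/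
/-!
A factor of `R` is a tile `p σ s` around a state `q`: `p` is empty (if `q ∈ I`) or `a^{G e}` for
a transition `e` into `q`, and `s` is empty (if `q ∈ F`) or `a^{H e}` for a transition `e` out
of `q`. Every tile contains exactly one `σ`, so a tiling of `σ λ(u)` puts one tile on each `σ`,
and each block `a^{m+1}` between two consecutive `σ`'s splits as `a^{H e} a^{G e'}`. Then
`H e + G e' = m + 1` gives `G e = G e'`, so `e = e'` is a transition reading `a` from the state
of one tile to the state of the next. Since `1 ≤ G e ≤ m`, neither `a^{G e}` nor `a^{H e}` is
empty, so the empty outer blocks force the first state to be initial and the last one final.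
-/

open RegularExpression

/-- Sum of a list of regular expressions. -/
def sumList {β : Type} (l : List (RegularExpression β)) : RegularExpression β :=
  l.foldr (· + ·) 0

/-- Product (concatenation) of a list of regular expressions. -/
def mulList {β : Type} (l : List (RegularExpression β)) : RegularExpression β :=
  l.foldr (· * ·) 1

/-- `n`-fold concatenation of a regular expression. -/
def npowRE {β : Type} (r : RegularExpression β) : ℕ → RegularExpression β
  | 0 => 1
  | 1 => r
  | n + 2 => r * npowRE r (n + 1)

/-- Paths in a transition table. -/
inductive RPath {α Q : Type} (Δ : Finset (Q × α × Q)) : Q → List α → Q → Prop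
  | nil (q : Q) : RPath Δ q [] q
  | cons {q q' t : Q} {a : α} {w : List α} :
      (q, a, q') ∈ Δ → RPath Δ q' w t → RPath Δ q ((a) :: w) t

/-- The expression `R` built from the automaton `(Δ, I, F)` and bijection `G`. -/
noncomputable def RofA {α Q : Type} [Fintype Q] [DecidableEq Q] [DecidableEq α]
    (Δ : Finset (Q × α × Q)) (I F : Finset Q) (G : (Q × α × Q) → ℕ) :
    RegularExpression (α ⊕ Unit) :=
  (sumList (((Finset.univ : Finset Q)).toList.map (fun q =>
    ((if q ∈ I then 1 else 0) +
      sumList ((Δ.toList.filter (fun e => e.2.2 == q)).map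
        (fun e => npowRE (char (Sum.inl e.2.1)) (G e)))) *
    char (Sum.inr ()) *
    ((if q ∈ F then 1 else 0) +
      sumList ((Δ.toList.filter (fun e => e.1 == q)).map
        (fun e => npowRE (char (Sum.inl e.2.1)) (Δ.card + 1 - G e))))))).star

/-- The letter encoding `λ(a) = a^{m+1} σ`. -/
def lamEnc {α : Type} (m : ℕ) (x : α) : List (α ⊕ Unit) :=
  List.replicate (m + 1) (Sum.inl x) ++ [Sum.inr ()]

namespace List

theorem append_cons_eq_append_cons_iff_of_notMem {β : Type} {x x' y y' : List β} {c : β}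
    (hx : c ∉ x) (hx' : c ∉ x') : x ++ c :: y = x' ++ c :: y' ↔ x = x' ∧ y = y' := by
  constructor
  · simp only [append_eq_append_iff, cons_eq_append_iff, cons_eq_cons]
    rintro (⟨d, rfl, ⟨rfl, -, rfl⟩ | ⟨e, rfl, rfl⟩⟩ | ⟨d, rfl, ⟨rfl, -, rfl⟩ | ⟨e, rfl, rfl⟩⟩) <;>
      simp_all
  · rintro ⟨rfl, rfl⟩
    rfl

end List

section RegularExpressionLemmas

variable {β : Type}

theorem mem_matches'_sumList {l : List (RegularExpression β)} {w : List β} :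
    w ∈ (sumList l).matches' ↔ ∃ r ∈ l, w ∈ r.matches' := by
  induction l with
  | nil => simp [sumList, matches'_zero]
  | cons r l ih =>
    rw [sumList, List.foldr_cons, matches'_add, Language.mem_add, ← sumList, ih]
    simp

theorem mem_matches'_npowRE_char {a : β} {w : List β} : ∀ {n : ℕ},
    w ∈ (npowRE (char a) n).matches' ↔ w = List.replicate n a
  | 0 => Iff.rfl
  | 1 => Iff.rfl
  | n + 2 => by
    rw [npowRE, matches'_mul, Language.mem_mul]
    simp only [mem_matches'_npowRE_char, matches'_char]
    exact ⟨by rintro ⟨_, rfl, _, rfl, rfl⟩; rfl, by rintro rfl; exact ⟨_, rfl, _, rfl, rfl⟩⟩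

end RegularExpressionLemmas

section Tiles

variable {α Q : Type} [DecidableEq Q] (Δ : Finset (Q × α × Q)) (I F : Finset Q)
  (G : Q × α × Q → ℕ)

local notation "σ" => (Sum.inr () : α ⊕ Unit)

noncomputable def leftFactor (q : Q) : RegularExpression (α ⊕ Unit) :=
  (if q ∈ I then 1 else 0) +
    sumList ((Δ.toList.filter (fun e => e.2.2 == q)).map
      (fun e => npowRE (char (Sum.inl e.2.1)) (G e)))

noncomputable def rightFactor (q : Q) : RegularExpression (α ⊕ Unit) :=
  (if q ∈ F then 1 else 0) +
    sumList ((Δ.toList.filter (fun e => e.1 == q)).map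
      (fun e => npowRE (char (Sum.inl e.2.1)) (Δ.card + 1 - G e)))

theorem RofA_eq_star [Fintype Q] [DecidableEq α] :
    RofA Δ I F G = (sumList ((Finset.univ : Finset Q).toList.map fun q =>
      leftFactor Δ I G q * char σ * rightFactor Δ F G q)).star :=
  rfl

variable {Δ I F G}

theorem mem_leftFactor {q : Q} {p : List (α ⊕ Unit)} :
    p ∈ (leftFactor Δ I G q).matches' ↔
      (q ∈ I ∧ p = []) ∨ ∃ e ∈ Δ, e.2.2 = q ∧ p = List.replicate (G e) (Sum.inl e.2.1) := by
  rw [leftFactor, matches'_add, Language.mem_add, mem_matches'_sumList]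
  refine or_congr ?_ ?_
  · split_ifs with hq
    · simp [hq, Language.mem_one]
    · simp [hq, Language.notMem_zero]
  · simp only [List.mem_map, List.mem_filter, Finset.mem_toList, beq_iff_eq,
      exists_exists_and_eq_and, mem_matches'_npowRE_char]
    simp only [and_assoc]

theorem mem_rightFactor {q : Q} {s : List (α ⊕ Unit)} :
    s ∈ (rightFactor Δ F G q).matches' ↔
      (q ∈ F ∧ s = []) ∨
        ∃ e ∈ Δ, e.1 = q ∧ s = List.replicate (Δ.card + 1 - G e) (Sum.inl e.2.1) := by
  rw [rightFactor, matches'_add, Language.mem_add, mem_matches'_sumList]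
  refine or_congr ?_ ?_
  · split_ifs with hq
    · simp [hq, Language.mem_one]
    · simp [hq, Language.notMem_zero]
  · simp only [List.mem_map, List.mem_filter, Finset.mem_toList, beq_iff_eq,
      exists_exists_and_eq_and, mem_matches'_npowRE_char]
    simp only [and_assoc]

theorem sigma_notMem_of_mem_leftFactor {q : Q} {p : List (α ⊕ Unit)}
    (hp : p ∈ (leftFactor Δ I G q).matches') : σ ∉ p := by
  rcases mem_leftFactor.1 hp with ⟨-, rfl⟩ | ⟨e, -, -, rfl⟩ <;> simp [List.mem_replicate]

theorem sigma_notMem_of_mem_rightFactor {q : Q} {s : List (α ⊕ Unit)}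
    (hs : s ∈ (rightFactor Δ F G q).matches') : σ ∉ s := by
  rcases mem_rightFactor.1 hs with ⟨-, rfl⟩ | ⟨e, -, -, rfl⟩ <;> simp [List.mem_replicate]

theorem nil_mem_leftFactor_iff (hpos : ∀ e ∈ Δ, 1 ≤ G e) {q : Q} :
    [] ∈ (leftFactor Δ I G q).matches' ↔ q ∈ I := by
  rw [mem_leftFactor]
  constructor
  · rintro (⟨hq, -⟩ | ⟨e, he, -, h⟩)
    · exact hq
    · have := hpos e he
      simp only [List.nil_eq, List.replicate_eq_nil_iff] at h
      omega
  · exact fun hq => Or.inl ⟨hq, rfl⟩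

theorem nil_mem_rightFactor_iff (hle : ∀ e ∈ Δ, G e ≤ Δ.card) {q : Q} :
    [] ∈ (rightFactor Δ F G q).matches' ↔ q ∈ F := by
  rw [mem_rightFactor]
  constructor
  · rintro (⟨hq, -⟩ | ⟨e, he, -, h⟩)
    · exact hq
    · have := hle e he
      simp only [List.nil_eq, List.replicate_eq_nil_iff] at h
      omega
  · exact fun hq => Or.inl ⟨hq, rfl⟩

/-- `H e + G e' = m + 1` forces `G e = G e'`, hence `e = e'` by injectivity of `G`. -/
theorem exists_rightFactor_leftFactor_eq_replicate_iff
    (hmaps : Set.MapsTo G Δ (Set.Icc 1 Δ.card)) (hinj : Set.InjOn G Δ) {q q' : Q} {a : α} :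
    (∃ s ∈ (rightFactor Δ F G q).matches', ∃ p ∈ (leftFactor Δ I G q').matches',
      List.replicate (Δ.card + 1) (Sum.inl a) = s ++ p) ↔ (q, a, q') ∈ Δ := by
  constructor
  · rintro ⟨s, hs, p, hp, h⟩
    have hlen := congrArg List.length h
    rw [mem_rightFactor] at hs
    rw [mem_leftFactor] at hp
    rcases hs with ⟨-, rfl⟩ | ⟨e, he, rfl, rfl⟩ <;> rcases hp with ⟨-, rfl⟩ | ⟨e', he', rfl, rfl⟩ <;>
      simp only [List.length_append, List.length_replicate, List.length_nil] at hlen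
    · omega
    · have := (hmaps he').2
      omega
    · have := (hmaps he).1
      omega
    · have := (hmaps he).2
      obtain rfl : e = e' := hinj he he' (by omega)
      obtain rfl : e.2.1 = a :=
        Sum.inl.inj (List.eq_of_mem_replicate (h ▸ List.mem_append_right _ <|
          List.mem_replicate.2 ⟨Nat.one_le_iff_ne_zero.1 (hmaps he).1, rfl⟩))
      exact he
  · intro he
    have := (hmaps he).2
    refine ⟨_, mem_rightFactor.2 (Or.inr ⟨_, he, rfl, rfl⟩),
      _, mem_leftFactor.2 (Or.inr ⟨_, he, rfl, rfl⟩), ?_⟩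
    rw [← List.replicate_add]
    congr 1
    omega

variable (Δ I F G)

def IsTile (l : List (α ⊕ Unit)) : Prop :=
  ∃ q, ∃ p ∈ (leftFactor Δ I G q).matches', ∃ s ∈ (rightFactor Δ F G q).matches',
    l = p ++ σ :: s

def TiledAfter (q : Q) (y : List (α ⊕ Unit)) : Prop :=
  ∃ s ∈ (rightFactor Δ F G q).matches', ∃ L : List (List (α ⊕ Unit)),
    (∀ l ∈ L, IsTile Δ I F G l) ∧ y = s ++ L.flatten

variable {Δ I F G}

theorem mem_RofA_iff [Fintype Q] [DecidableEq α] {w : List (α ⊕ Unit)} :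
    w ∈ (RofA Δ I F G).matches' ↔
      ∃ L : List (List (α ⊕ Unit)), w = L.flatten ∧ ∀ l ∈ L, IsTile Δ I F G l := by
  rw [RofA_eq_star, matches'_star, Language.mem_kstar]
  refine exists_congr fun L => and_congr_right fun _ => forall₂_congr fun l _ => ?_
  simp only [mem_matches'_sumList, List.mem_map, Finset.mem_toList, Finset.mem_univ, true_and,
    exists_exists_eq_and, matches'_mul, matches'_char, Language.mem_mul, IsTile]
  refine exists_congr fun q => ⟨?_, ?_⟩
  · rintro ⟨_, ⟨p, hp, _, rfl, rfl⟩, s, hs, rfl⟩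
    exact ⟨p, hp, s, hs, by simp⟩
  · rintro ⟨p, hp, s, hs, rfl⟩
    exact ⟨_, ⟨p, hp, _, rfl, rfl⟩, s, hs, by simp⟩

/-- Each tile contains exactly one `σ`, so the `σ` after a `σ`-free prefix is that of the
first tile. -/
theorem exists_leftFactor_of_append_flatten_eq {L : List (List (α ⊕ Unit))}
    (hL : ∀ l ∈ L, IsTile Δ I F G l) {s x y : List (α ⊕ Unit)} (hs : σ ∉ s) (hx : σ ∉ x)
    (h : s ++ L.flatten = x ++ σ :: y) :
    ∃ q, ∃ p ∈ (leftFactor Δ I G q).matches', x = s ++ p ∧ TiledAfter Δ I F G q y := by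
  cases L with
  | nil =>
    rw [List.flatten_nil, List.append_nil] at h
    exact absurd (h ▸ List.mem_append_right x List.mem_cons_self) hs
  | cons l L =>
    obtain ⟨q, p, hp, s', hs', rfl⟩ := hL l List.mem_cons_self
    replace h : (s ++ p) ++ σ :: (s' ++ L.flatten) = x ++ σ :: y := by simpa using h
    obtain ⟨rfl, rfl⟩ := (List.append_cons_eq_append_cons_iff_of_notMem
      (by simp [hs, sigma_notMem_of_mem_leftFactor hp]) hx).1 h
    exact ⟨q, p, hp, rfl, s', hs', L, fun l hl => hL l (List.mem_cons_of_mem _ hl), rfl⟩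

theorem mem_RofA_append_sigma_iff [Fintype Q] [DecidableEq α] {x y : List (α ⊕ Unit)}
    (hx : σ ∉ x) :
    x ++ σ :: y ∈ (RofA Δ I F G).matches' ↔
      ∃ q, x ∈ (leftFactor Δ I G q).matches' ∧ TiledAfter Δ I F G q y := by
  rw [mem_RofA_iff]
  constructor
  · rintro ⟨L, h, hL⟩
    obtain ⟨q, p, hp, rfl, ht⟩ :=
      exists_leftFactor_of_append_flatten_eq hL List.not_mem_nil hx (s := []) h.symm
    exact ⟨q, hp, ht⟩
  · rintro ⟨q, hxq, s, hs, L, hL, rfl⟩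
    refine ⟨(x ++ σ :: s) :: L, by simp, ?_⟩
    intro l hl
    rcases List.mem_cons.1 hl with rfl | hl
    exacts [⟨q, x, hxq, s, hs, rfl⟩, hL l hl]

theorem tiledAfter_append_sigma_iff {q : Q} {x y : List (α ⊕ Unit)} (hx : σ ∉ x) :
    TiledAfter Δ I F G q (x ++ σ :: y) ↔
      ∃ q', (∃ s ∈ (rightFactor Δ F G q).matches', ∃ p ∈ (leftFactor Δ I G q').matches',
        x = s ++ p) ∧ TiledAfter Δ I F G q' y := by
  constructor
  · rintro ⟨s, hs, L, hL, h⟩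
    obtain ⟨q', p, hp, rfl, ht⟩ :=
      exists_leftFactor_of_append_flatten_eq hL (sigma_notMem_of_mem_rightFactor hs) hx h.symm
    exact ⟨q', ⟨s, hs, p, hp, rfl⟩, ht⟩
  · rintro ⟨q', ⟨s, hs, p, hp, rfl⟩, s', hs', L, hL, rfl⟩
    refine ⟨s, hs, (p ++ σ :: s') :: L, ?_, by simp⟩
    intro l hl
    rcases List.mem_cons.1 hl with rfl | hl
    exacts [⟨q', p, hp, s', hs', rfl⟩, hL l hl]

theorem tiledAfter_nil_iff (hle : ∀ e ∈ Δ, G e ≤ Δ.card) {q : Q} :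
    TiledAfter Δ I F G q [] ↔ q ∈ F := by
  rw [← nil_mem_rightFactor_iff hle]
  constructor
  · rintro ⟨s, hs, L, -, h⟩
    rwa [(List.append_eq_nil_iff.1 h.symm).1] at hs
  · exact fun hq => ⟨[], hq, [], by simp, rfl⟩

end Tiles

namespace RPath

variable {α Q : Type} {Δ : Finset (Q × α × Q)}

theorem nil_iff {q t : Q} : RPath Δ q [] t ↔ q = t :=
  ⟨by rintro ⟨⟩; rfl, by rintro rfl; exact nil q⟩

theorem cons_iff {q t : Q} {a : α} {w : List α} :
    RPath Δ q (a :: w) t ↔ ∃ q', (q, a, q') ∈ Δ ∧ RPath Δ q' w t :=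
  ⟨by rintro (_ | ⟨he, hw⟩); exact ⟨_, he, hw⟩, fun ⟨_, he, hw⟩ => cons he hw⟩

end RPath

section Encoding

variable {α Q : Type} [DecidableEq Q] {Δ : Finset (Q × α × Q)} {I F : Finset Q}
  {G : Q × α × Q → ℕ}

theorem tiledAfter_flatten_map_lamEnc_iff (hmaps : Set.MapsTo G Δ (Set.Icc 1 Δ.card))
    (hinj : Set.InjOn G Δ) {q : Q} {u : List α} :
    TiledAfter Δ I F G q (u.map (lamEnc Δ.card)).flatten ↔ ∃ f ∈ F, RPath Δ q u f := by
  induction u generalizing q with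
  | nil =>
    simp [tiledAfter_nil_iff fun e he => (hmaps he).2, RPath.nil_iff]
  | cons a u ih =>
    rw [List.map_cons, List.flatten_cons, lamEnc, List.append_assoc, List.singleton_append,
      tiledAfter_append_sigma_iff (by simp [List.mem_replicate])]
    simp only [exists_rightFactor_leftFactor_eq_replicate_iff hmaps hinj, ih, RPath.cons_iff]
    exact ⟨fun ⟨q', he, f, hf, hp⟩ => ⟨f, hf, q', he, hp⟩,
      fun ⟨f, hf, q', he, hp⟩ => ⟨q', he, f, hf, hp⟩⟩

theorem mem_RofA_sigma_cons_iff [Fintype Q] [DecidableEq α] (hpos : ∀ e ∈ Δ, 1 ≤ G e)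
    {y : List (α ⊕ Unit)} :
    Sum.inr () :: y ∈ (RofA Δ I F G).matches' ↔ ∃ q ∈ I, TiledAfter Δ I F G q y := by
  simpa [nil_mem_leftFactor_iff hpos] using
    mem_RofA_append_sigma_iff (Δ := Δ) (I := I) (F := F) (G := G) (x := []) (y := y)
      List.not_mem_nil

end Encoding

theorem stmt_8_general {α Q : Type} [Fintype Q] [DecidableEq Q] [DecidableEq α]
    (Δ : Finset (Q × α × Q)) (I F : Finset Q)
    (G : (Q × α × Q) → ℕ) (hG : Set.BijOn G ↑Δ (Set.Icc 1 Δ.card)) :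
    ∀ u : List α,
      (∃ i ∈ I, ∃ f ∈ F, RPath Δ i u f) ↔
      (Sum.inr () :: (u.map (lamEnc Δ.card)).flatten) ∈ (RofA Δ I F G).matches' := by
  intro u
  rw [mem_RofA_sigma_cons_iff fun e he => (hG.mapsTo he).1]
  simp only [tiledAfter_flatten_map_lamEnc_iff hG.mapsTo hG.injOn]

/-- for a trim automaton `A` with `m` transitions and the expression
`R = (Σ_q [(ε?_I + Σ a^{G(e)}) σ (ε?_F + Σ a^{H(e)})])^*`, a word `u` is accepted
by `A` iff `σ · λ(u)` is matched by `R`, where `λ(a) = a^{m+1} σ`. -/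
theorem stmt_8 {α Q : Type} [Fintype Q] [DecidableEq Q] [DecidableEq α]
    (Δ : Finset (Q × α × Q)) (I F : Finset Q)
    (htrim : ∀ q : Q, (∃ i ∈ I, ∃ w : List α, RPath Δ i w q) ∧
                      (∃ f ∈ F, ∃ w : List α, RPath Δ q w f))
    (G : (Q × α × Q) → ℕ) (hG : Set.BijOn G ↑Δ (Set.Icc 1 Δ.card)) :
    ∀ u : List α,
      (∃ i ∈ I, ∃ f ∈ F, RPath Δ i u f) ↔
      (Sum.inr () :: (u.map (lamEnc Δ.card)).flatten) ∈ (RofA Δ I F G).matches' :=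
  stmt_8_general Δ I F G hG
end

section
/- Let R be a regular expression and Gl(R) its Glushkov automaton. For any graph database D, a sequence (e_1, α_1)…(e_n, α_n) of (edge, position) pairs is a binding trail of D matching R if and only if the corresponding run in D×Gl(R) — visiting states α_1, …, α_n after the initial state — is a run such that the pairs (e_i, q_{i+1}) of edge and arriving state are pairwise distinct. Consequently, the binding-trail semantics ⟦R⟧_BT(D) equals π_D applied to the runs of D×Gl(R) with pairwise-distinct (edge, arrival-state) pairs. -/
open RegularExpression

/-- Number of occurrences of the letter `b` in a regular expression. -/
def charCount {β : Type} [DecidableEq β] (b : β) : RegularExpression β → ℕ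
  | RegularExpression.zero => 0
  | RegularExpression.epsilon => 0
  | RegularExpression.char c => if c = b then 1 else 0
  | RegularExpression.plus p q => charCount b p + charCount b q
  | RegularExpression.comp p q => charCount b p + charCount b q
  | RegularExpression.star p => charCount b p

/-- A linearised expression: each position occurs at most once. -/
def Linear {Γ : Type} [DecidableEq Γ] (R' : RegularExpression Γ) : Prop :=
  ∀ γ : Γ, charCount γ R' ≤ 1

/-- Transitions of the Glushkov automaton of a linearised expression `R'` over the
positions `Γ`, with underlying-letter map `bar : Γ → σ`; states are `Option Γ`,
`none` being the initial state `init`. -/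
def GlDelta {σ Γ : Type} (bar : Γ → σ) (R' : RegularExpression Γ) :
    Set (Option Γ × σ × Option Γ) :=
  {t | (∃ (α β : Γ) (u v : List Γ), t = (some α, bar β, some β) ∧
          u ++ α :: β :: v ∈ R'.matches') ∨
       (∃ (α : Γ) (u : List Γ), t = (none, bar α, some α) ∧ α :: u ∈ R'.matches')}

/-- Final states of the Glushkov automaton. -/
def GlFinal {Γ : Type} (R' : RegularExpression Γ) : Set (Option Γ) :=
  {q | (∃ (α : Γ) (u : List Γ), q = some α ∧ u ++ [α] ∈ R'.matches') ∨
       (q = none ∧ [] ∈ R'.matches')}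

/-- The Glushkov automaton as an automaton with state set `Option Γ`. -/
def GlAuto {σ Γ : Type} (bar : Γ → σ) (R' : RegularExpression Γ) :
    Auto σ (Option Γ) :=
  ⟨GlDelta bar R', {none}, GlFinal R'⟩

/-- A binding trail of `D` matching `R` (given via its linearisation `R'`),
from `s` to `t`. -/
def BindingTrail {σ V E Γ : Type} (D : GraphDB σ V E) (bar : Γ → σ)
    (R' : RegularExpression Γ) (s : V) (l : List (E × Γ)) (t : V) : Prop :=
  D.IsWalkFrom s (l.map Prod.fst) t ∧
  (∀ p ∈ l, bar p.2 ∈ D.lbl p.1) ∧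
  (l.map Prod.snd) ∈ R'.matches' ∧
  l.Nodup

namespace Glushkov

open List Computability

variable {Γ : Type}

def letters (L : Language Γ) : Set Γ := {a | ∃ w ∈ L, a ∈ w}

/-- States are `Option Γ`: `none` before the first letter, `some a` after reading `a`. -/
def Step (L : Language Γ) (q : Option Γ) (b : Γ) : Prop :=
  ∃ u v, u.getLast? = q ∧ u ++ b :: v ∈ L

def Final (L : Language Γ) (q : Option Γ) : Prop :=
  ∃ u ∈ L, u.getLast? = q

def AcceptsFrom (L : Language Γ) : Option Γ → List Γ → Prop
  | q, [] => Final L q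
  | q, b :: w => Step L q b ∧ AcceptsFrom L (some b) w

def localHull (L : Language Γ) : Language Γ := {w | AcceptsFrom L none w}

variable {L M : Language Γ} {q : Option Γ} {a b : Γ} {w : List Γ}

theorem Step.mem_letters (h : Step L q b) : b ∈ letters L ∧ ∀ a ∈ q, a ∈ letters L := by
  obtain ⟨u, v, rfl, huv⟩ := h
  exact ⟨⟨_, huv, by simp⟩, fun a ha => ⟨_, huv, by simp [mem_of_getLast? ha]⟩⟩

theorem Final.mem_letters (h : Final L q) : ∀ a ∈ q, a ∈ letters L := by
  obtain ⟨u, hu, rfl⟩ := h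
  exact fun a ha => ⟨u, hu, mem_of_getLast? ha⟩

theorem acceptsFrom_getLast? {u : List Γ} (h : u ++ w ∈ L) : AcceptsFrom L u.getLast? w := by
  induction w generalizing u with
  | nil => exact ⟨u, by simpa using h, rfl⟩
  | cons b w ih =>
    refine ⟨⟨u, w, rfl, h⟩, ?_⟩
    simpa using ih (u := u ++ [b]) (by simpa using h)

theorem le_localHull (L : Language Γ) : L ≤ localHull L :=
  fun _ hw => acceptsFrom_getLast? (u := []) hw

theorem localHull_le_of_length_le_one (hL : ∀ w ∈ L, w.length ≤ 1) : localHull L ≤ L := by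
  rintro (_ | ⟨b, _ | ⟨c, _⟩⟩) hw
  · obtain ⟨u, hu, hu0⟩ := hw
    rwa [← getLast?_eq_none_iff.mp hu0]
  · obtain ⟨⟨u, v, hu0, huv⟩, -⟩ := hw
    obtain rfl := getLast?_eq_none_iff.mp hu0
    obtain rfl : v = [] := by simpa using hL _ huv
    exact huv
  · obtain ⟨-, ⟨u, v, hub, huv⟩, -⟩ := hw
    obtain ⟨u, rfl⟩ := getLast?_eq_some_iff.mp hub
    exact absurd (hL _ huv) (by simp; omega)

theorem step_add (h : Step (L + M) q b) : Step L q b ∨ Step M q b := by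
  obtain ⟨u, v, hq, h | h⟩ := h
  exacts [.inl ⟨u, v, hq, h⟩, .inr ⟨u, v, hq, h⟩]

theorem final_add (h : Final (L + M) q) : Final L q ∨ Final M q := by
  obtain ⟨u, h | h, hq⟩ := h
  exacts [.inl ⟨u, h, hq⟩, .inr ⟨u, h, hq⟩]

theorem step_mul (h : Step (L * M) q b) :
    Step L q b ∨ (Final L q ∧ Step M none b) ∨ (q ≠ none ∧ Step M q b) := by
  obtain ⟨u, v, rfl, x, hx, y, hy, hxy⟩ := h
  rcases append_eq_append_iff.mp hxy with ⟨m, rfl, rfl⟩ | ⟨m, rfl, hm⟩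
  · rcases m.eq_nil_or_concat' with rfl | ⟨m, c, rfl⟩
    · exact .inr (.inl ⟨⟨x, hx, by simp⟩, ⟨[], v, rfl, hy⟩⟩)
    · exact .inr (.inr ⟨by simp, ⟨m ++ [c], v, by simp, hy⟩⟩)
  · rcases m with _ | ⟨c, m⟩
    · rw [append_nil] at hx
      rw [nil_append] at hm
      exact .inr (.inl ⟨⟨u, hx, rfl⟩, ⟨[], v, rfl, hm ▸ hy⟩⟩)
    · obtain ⟨rfl, rfl⟩ := cons_eq_cons.mp hm
      exact .inl ⟨u, m, rfl, hx⟩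

theorem final_mul (h : Final (L * M) q) : (Final L q ∧ [] ∈ M) ∨ (q ≠ none ∧ Final M q) := by
  obtain ⟨u, ⟨x, hx, y, hy, rfl⟩, rfl⟩ := h
  rcases y.eq_nil_or_concat' with rfl | ⟨y, c, rfl⟩
  · exact .inl ⟨⟨x, hx, by simp⟩, hy⟩
  · exact .inr ⟨by simp, ⟨_, hy, by simp⟩⟩

theorem step_kstar (h : Step (L∗) q b) : Step L q b ∨ (Final L q ∧ Step L none b) := by
  obtain ⟨u, v, rfl, huv⟩ := h
  obtain ⟨S, hS, hSL⟩ := Language.mem_kstar.mp huv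
  clear huv
  induction S generalizing u v with
  | nil => simp at hS
  | cons c S ih =>
    have hc : c ∈ L := hSL c mem_cons_self
    have ih := fun u v h => ih u v h fun y hy => hSL y (mem_cons_of_mem c hy)
    rw [flatten_cons] at hS
    rcases append_eq_append_iff.mp hS with ⟨m, rfl, hm⟩ | ⟨m, rfl, hm⟩
    · rcases m with _ | ⟨d, m⟩
      · rw [append_nil] at hc
        rw [nil_append] at hm
        exact .inr ⟨⟨u, hc, rfl⟩, (ih [] v hm).elim id And.right⟩
      · obtain ⟨rfl, rfl⟩ := cons_eq_cons.mp hm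
        exact .inl ⟨u, m, rfl, hc⟩
    · rcases m.eq_nil_or_concat' with rfl | ⟨m, d, rfl⟩
      · rw [append_nil]
        exact .inr ⟨⟨c, hc, rfl⟩, (ih [] v hm.symm).elim id And.right⟩
      · simpa using ih _ v hm.symm

theorem final_kstar (h : Final (L∗) q) : q = none ∨ Final L q := by
  obtain ⟨u, hu, rfl⟩ := h
  obtain ⟨S, rfl, hSL⟩ := Language.mem_kstar.mp hu
  clear hu
  induction S with
  | nil => simp
  | cons c S ih =>
    have ih := ih fun y hy => hSL y (mem_cons_of_mem c hy)
    rw [flatten_cons, getLast?_append]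
    cases hl : S.flatten.getLast? with
    | none => exact .inr ⟨c, hSL c mem_cons_self, by simp⟩
    | some a => simpa [hl] using ih

theorem acceptsFrom_of_forall_letters
    (hstep : ∀ a ∈ letters M, ∀ b, Step L (some a) b → Step M (some a) b)
    (hfinal : ∀ a ∈ letters M, Final L (some a) → Final M (some a))
    (ha : a ∈ letters M) (h : AcceptsFrom L (some a) w) : AcceptsFrom M (some a) w := by
  induction w generalizing a with
  | nil => exact hfinal a ha h
  | cons b w ih =>
    have hs := hstep a ha b h.1
    exact ⟨hs, ih hs.mem_letters.1 h.2⟩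

theorem acceptsFrom_add_right (hLM : Disjoint (letters L) (letters M)) (ha : a ∈ letters M)
    (h : AcceptsFrom (L + M) (some a) w) : AcceptsFrom M (some a) w := by
  have hL : ∀ a ∈ letters M, a ∉ letters L := fun a ha => Set.disjoint_right.mp hLM ha
  refine acceptsFrom_of_forall_letters (fun a ha b hs => ?_) (fun a ha hf => ?_) ha h
  · exact (step_add hs).resolve_left fun hs => hL a ha (hs.mem_letters.2 a rfl)
  · exact (final_add hf).resolve_left fun hf => hL a ha (hf.mem_letters a rfl)

theorem acceptsFrom_mul_right (hLM : Disjoint (letters L) (letters M)) (ha : a ∈ letters M)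
    (h : AcceptsFrom (L * M) (some a) w) : AcceptsFrom M (some a) w := by
  have hL : ∀ a ∈ letters M, a ∉ letters L := fun a ha => Set.disjoint_right.mp hLM ha
  refine acceptsFrom_of_forall_letters (fun a ha b hs => ?_) (fun a ha hf => ?_) ha h
  · rcases step_mul hs with hs | ⟨hf, -⟩ | ⟨-, hs⟩
    · exact absurd (hs.mem_letters.2 a rfl) (hL a ha)
    · exact absurd (hf.mem_letters a rfl) (hL a ha)
    · exact hs
  · rcases final_mul hf with ⟨hf, -⟩ | ⟨-, hf⟩
    · exact absurd (hf.mem_letters a rfl) (hL a ha)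
    · exact hf

theorem acceptsFrom_mul_split (hLM : Disjoint (letters L) (letters M))
    (hq : ∀ a ∈ q, a ∈ letters L) (h : AcceptsFrom (L * M) q w) :
    ∃ w₁ w₂, w₁ ++ w₂ = w ∧ AcceptsFrom L q w₁ ∧ w₂ ∈ localHull M := by
  have hM : ∀ a ∈ q, a ∉ letters M := fun a ha => Set.disjoint_left.mp hLM (hq a ha)
  induction w generalizing q with
  | nil =>
    rcases final_mul h with ⟨hf, hnil⟩ | ⟨hq0, hf⟩
    · exact ⟨[], [], rfl, hf, le_localHull M hnil⟩
    · obtain ⟨a, rfl⟩ := Option.ne_none_iff_exists'.mp hq0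
      exact absurd (hf.mem_letters a rfl) (hM a rfl)
  | cons b w ih =>
    obtain ⟨hs, hw⟩ := h
    rcases step_mul hs with hs | ⟨hf, hs⟩ | ⟨hq0, hs⟩
    · obtain ⟨w₁, w₂, rfl, h₁, h₂⟩ := ih (by simpa using hs.mem_letters.1) hw
        (by simpa using Set.disjoint_left.mp hLM hs.mem_letters.1)
      exact ⟨b :: w₁, w₂, rfl, ⟨hs, h₁⟩, h₂⟩
    · exact ⟨[], b :: w, rfl, hf, hs, acceptsFrom_mul_right hLM hs.mem_letters.1 hw⟩
    · obtain ⟨a, rfl⟩ := Option.ne_none_iff_exists'.mp hq0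
      exact absurd (hs.mem_letters.2 a rfl) (hM a rfl)

theorem acceptsFrom_kstar_split (h : AcceptsFrom (L∗) (some a) w) :
    ∃ w₁ w₂, w₁ ++ w₂ = w ∧ AcceptsFrom L (some a) w₁ ∧ w₂ ∈ (localHull L)∗ := by
  induction w generalizing a with
  | nil =>
    obtain ⟨⟨⟩⟩ | hf := final_kstar h
    exact ⟨[], [], rfl, hf, Language.nil_mem_kstar _⟩
  | cons b w ih =>
    obtain ⟨hs, hw⟩ := h
    obtain ⟨w₁, w₂, rfl, h₁, h₂⟩ := ih hw
    rcases step_kstar hs with hs | ⟨hf, hs⟩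
    · exact ⟨b :: w₁, w₂, rfl, ⟨hs, h₁⟩, h₂⟩
    · have hb : b :: w₁ ∈ localHull L := ⟨hs, h₁⟩
      exact ⟨[], b :: w₁ ++ w₂, rfl, hf,
        mul_kstar_le_kstar (a := localHull L) (Language.append_mem_mul hb h₂)⟩

theorem localHull_add_le (hLM : Disjoint (letters L) (letters M)) :
    localHull (L + M) ≤ localHull L + localHull M := by
  rintro (_ | ⟨b, w⟩) hw
  · exact final_add hw
  · obtain ⟨hs, hw⟩ := hw
    rcases step_add hs with hs | hs
    · exact .inl ⟨hs, acceptsFrom_add_right hLM.symm hs.mem_letters.1 (add_comm L M ▸ hw)⟩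
    · exact .inr ⟨hs, acceptsFrom_add_right hLM hs.mem_letters.1 hw⟩

theorem localHull_mul_le (hLM : Disjoint (letters L) (letters M)) :
    localHull (L * M) ≤ localHull L * localHull M := by
  intro w hw
  obtain ⟨w₁, w₂, rfl, h₁, h₂⟩ := acceptsFrom_mul_split hLM (q := none) (by simp) hw
  exact Language.append_mem_mul h₁ h₂

theorem localHull_kstar_le : localHull (L∗) ≤ (localHull L)∗ := by
  rintro (_ | ⟨b, w⟩) hw
  · exact Language.nil_mem_kstar _
  · obtain ⟨hs, hw⟩ := hw
    obtain ⟨w₁, w₂, rfl, h₁, h₂⟩ := acceptsFrom_kstar_split hw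
    have hb : b :: w₁ ∈ localHull L := ⟨(step_kstar hs).elim id And.right, h₁⟩
    exact mul_kstar_le_kstar (a := localHull L) (Language.append_mem_mul hb h₂)

end Glushkov

section Linear

open Glushkov Computability

variable {Γ : Type} [DecidableEq Γ]

theorem one_le_charCount_of_mem {R : RegularExpression Γ} {w : List Γ} {a : Γ}
    (hw : w ∈ R.matches') (ha : a ∈ w) : 1 ≤ charCount a R := by
  induction R generalizing w with
  | zero => exact absurd hw (Language.notMem_zero w)
  | epsilon => simp_all [(Language.mem_one w).mp hw]
  | char c =>
    obtain rfl : w = [c] := hw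
    simp_all [charCount]
  | plus p q ihp ihq =>
    have := (Language.mem_add _ _ w).mp hw |>.imp (ihp · ha) (ihq · ha)
    simp only [charCount]
    omega
  | comp p q ihp ihq =>
    obtain ⟨x, hx, y, hy, rfl⟩ := Language.mem_mul.mp hw
    have := (List.mem_append.mp ha).imp (ihp hx) (ihq hy)
    simp only [charCount]
    omega
  | star p ih =>
    obtain ⟨S, rfl, hS⟩ := Language.mem_kstar.mp hw
    obtain ⟨c, hc, hac⟩ := List.mem_flatten.mp ha
    exact ih (hS c hc) hac

theorem linear_and_disjoint_of_charCount_add {p q : RegularExpression Γ}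
    (h : ∀ γ, charCount γ p + charCount γ q ≤ 1) :
    Linear p ∧ Linear q ∧ Disjoint (letters p.matches') (letters q.matches') := by
  refine ⟨fun γ => by have := h γ; omega, fun γ => by have := h γ; omega, ?_⟩
  refine Set.disjoint_left.mpr fun a ⟨u, hu, hau⟩ ⟨v, hv, hav⟩ => ?_
  have := h a
  have := one_le_charCount_of_mem hu hau
  have := one_le_charCount_of_mem hv hav
  omega

theorem localHull_le_matches' {R : RegularExpression Γ} (hR : Linear R) :
    localHull R.matches' ≤ R.matches' := by
  induction R with
  | zero => exact localHull_le_of_length_le_one fun w hw => absurd hw (Language.notMem_zero w)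
  | epsilon => exact localHull_le_of_length_le_one fun w hw => by simp [(Language.mem_one w).mp hw]
  | char c => exact localHull_le_of_length_le_one fun w (hw : w = [c]) => by simp [hw]
  | plus p q ihp ihq =>
    obtain ⟨hp, hq, hpq⟩ := linear_and_disjoint_of_charCount_add hR
    exact (localHull_add_le hpq).trans (add_le_add (ihp hp) (ihq hq))
  | comp p q ihp ihq =>
    obtain ⟨hp, hq, hpq⟩ := linear_and_disjoint_of_charCount_add hR
    exact (localHull_mul_le hpq).trans (mul_le_mul' (ihp hp) (ihq hq))
  | star p ih => exact localHull_kstar_le.trans (kstar_mono (ih hR))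

end Linear

section Product

variable {σ V E Γ : Type}

theorem GraphDB.isWalkFrom_nil_iff (D : GraphDB σ V E) {s t : V} :
    D.IsWalkFrom s [] t ↔ s = t := by
  constructor
  · rintro ⟨⟩; rfl
  · rintro rfl; exact .nil s

theorem GraphDB.isWalkFrom_cons_iff (D : GraphDB σ V E) {s t : V} {e : E} {es : List E} :
    D.IsWalkFrom s (e :: es) t ↔ D.src e = s ∧ D.IsWalkFrom (D.tgt e) es t := by
  constructor
  · rintro (_ | ⟨hs, rfl, hw⟩); exact ⟨hs, hw⟩
  · rintro ⟨hs, hw⟩; exact .cons hs rfl hw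

theorem mem_glDelta_iff (bar : Γ → σ) (R' : RegularExpression Γ) {q q' : Option Γ} {c : σ} :
    (q, c, q') ∈ GlDelta bar R' ↔
      ∃ β, q' = some β ∧ c = bar β ∧ Glushkov.Step R'.matches' q β := by
  constructor
  · rintro (⟨α, β, u, v, h, hm⟩ | ⟨α, u, h, hm⟩) <;> simp only [Prod.mk.injEq] at h <;>
      obtain ⟨rfl, rfl, rfl⟩ := h
    · exact ⟨β, rfl, rfl, u ++ [α], v, by simp, by simpa using hm⟩
    · exact ⟨α, rfl, rfl, [], u, rfl, hm⟩
  · rintro ⟨β, rfl, rfl, u, v, rfl, hm⟩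
    rcases u.eq_nil_or_concat' with rfl | ⟨u, α, rfl⟩
    · exact .inr ⟨β, v, rfl, hm⟩
    · exact .inl ⟨α, β, u, v, by simp, by simpa using hm⟩

theorem mem_glFinal_iff (R' : RegularExpression Γ) {q : Option Γ} :
    q ∈ GlFinal R' ↔ Glushkov.Final R'.matches' q := by
  constructor
  · rintro (⟨α, u, rfl, hm⟩ | ⟨rfl, hm⟩)
    · exact ⟨_, hm, by simp⟩
    · exact ⟨[], hm, rfl⟩
  · rintro ⟨u, hu, rfl⟩
    rcases u.eq_nil_or_concat' with rfl | ⟨u, α, rfl⟩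
    · exact .inr ⟨rfl, hu⟩
    · exact .inl ⟨α, u, by simp, hu⟩

theorem exists_walk_prodDB_glAuto_iff (D : GraphDB σ V E) (bar : Γ → σ)
    (R' : RegularExpression Γ) (s t : V) (q : Option Γ) (l : List (E × Γ)) :
    (∃ (f : Option Γ) (r : List (ProdEdge D (GlAuto bar R'))),
        (prodDB D (GlAuto bar R')).IsWalkFrom (s, q) r (t, f) ∧ f ∈ GlFinal R' ∧
        r.map (fun p => (p.1.1, p.1.2.2.2)) = l.map (fun p => (p.1, some p.2))) ↔
      D.IsWalkFrom s (l.map Prod.fst) t ∧ (∀ p ∈ l, bar p.2 ∈ D.lbl p.1) ∧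
        Glushkov.AcceptsFrom R'.matches' q (l.map Prod.snd) := by
  induction l generalizing s q with
  | nil =>
    constructor
    · rintro ⟨f, r, hr, hf, hmap⟩
      obtain rfl := List.map_eq_nil_iff.mp hmap
      obtain ⟨rfl, rfl⟩ := Prod.mk.inj ((GraphDB.isWalkFrom_nil_iff _).mp hr)
      exact ⟨.nil _, by simp, (mem_glFinal_iff R').mp hf⟩
    · rintro ⟨hw, -, hf⟩
      obtain rfl := (GraphDB.isWalkFrom_nil_iff _).mp hw
      exact ⟨q, [], .nil _, (mem_glFinal_iff R').mpr hf, rfl⟩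
  | cons p l ih =>
    obtain ⟨e, β⟩ := p
    simp only [List.map_cons, List.forall_mem_cons, GraphDB.isWalkFrom_cons_iff,
      Glushkov.AcceptsFrom]
    constructor
    · rintro ⟨f, _ | ⟨ed, r⟩, hr, hf, hmap⟩
      · exact absurd hmap (List.cons_ne_nil _ _).symm
      rw [List.map_cons, List.cons.injEq, Prod.mk.injEq] at hmap
      obtain ⟨⟨rfl, hβ⟩, hmap⟩ := hmap
      rw [GraphDB.isWalkFrom_cons_iff] at hr
      obtain ⟨hsrcq, hr⟩ := hr
      obtain ⟨hsrc, rfl⟩ := Prod.mk.inj hsrcq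
      obtain ⟨hΔ, hlbl⟩ := ed.2
      obtain ⟨β', hβ', hc, hs⟩ := (mem_glDelta_iff bar R').mp hΔ
      obtain rfl : β = β' := Option.some_injective _ (hβ.symm.trans hβ')
      have htgt : (prodDB D (GlAuto bar R')).tgt ed = (D.tgt ed.1.1, some β) := Prod.ext rfl hβ
      obtain ⟨hw, hl, ha⟩ := (ih _ _).mp ⟨f, r, htgt ▸ hr, hf, hmap⟩
      exact ⟨⟨hsrc, hw⟩, ⟨hc ▸ hlbl, hl⟩, hs, ha⟩
    · rintro ⟨⟨hsrc, hw⟩, ⟨hlbl, hl⟩, hs, ha⟩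
      obtain ⟨f, r, hr, hf, hmap⟩ := (ih _ _).mpr ⟨hw, hl, ha⟩
      let ed : ProdEdge D (GlAuto bar R') :=
        ⟨(e, q, bar β, some β), (mem_glDelta_iff bar R').mpr ⟨β, rfl, rfl, hs⟩, hlbl⟩
      refine ⟨f, ed :: r, (GraphDB.isWalkFrom_cons_iff _).mpr ⟨?_, hr⟩, hf, ?_⟩
      · simp [ed, prodDB, hsrc]
      · rw [List.map_cons, hmap]

end Product

/-- binding trails matching `R` correspond exactly to the runs of
`D × Gl(R)` whose (edge, arriving-state) pairs are pairwise distinct; hence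
`⟦R⟧_BT(D)` is the projection of those runs. -/
theorem stmt_11 {σ V E Γ : Type} [DecidableEq Γ] (D : GraphDB σ V E)
    (bar : Γ → σ) (R' : RegularExpression Γ) (hlin : Linear R')
    (s t : V) (l : List (E × Γ)) :
    BindingTrail D bar R' s l t ↔
    ∃ (f : Option Γ) (r : List (ProdEdge D (GlAuto bar R'))),
      IsRun D (GlAuto bar R') (s, none) r (t, f) ∧
      r.map (fun p => (p.1.1, p.1.2.2.2)) = l.map (fun p => (p.1, some p.2)) ∧
      (r.map (fun p => (p.1.1, p.1.2.2.2))).Nodup := by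
  have hinj : Function.Injective (fun p : E × Γ => (p.1, some p.2)) :=
    fun p p' h => by simpa [Prod.ext_iff] using h
  have hruns := exists_walk_prodDB_glAuto_iff D bar R' s t none l
  constructor
  · rintro ⟨hw, hl, hm, hnd⟩
    obtain ⟨f, r, hr, hf, hmap⟩ := hruns.mpr ⟨hw, hl, Glushkov.le_localHull _ hm⟩
    exact ⟨f, r, ⟨hr, rfl, hf⟩, hmap, hmap ▸ hnd.map hinj⟩
  · rintro ⟨f, r, ⟨hr, -, hf⟩, hmap, hnd⟩
    obtain ⟨hw, hl, hm⟩ := hruns.mp ⟨f, r, hr, hf, hmap⟩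
    exact ⟨hw, hl, localHull_le_matches' hlin hm, (hmap ▸ hnd).of_map _⟩
end

section
/- Let R be a regular expression, D a graph database, and s, t vertices of D. If w is a walk from s to t of minimal length among all walks from s to t whose label set meets L(R), then w belongs to the binding-trail semantics ⟦R⟧_BT(D): there is a binding trail of D matching R whose underlying walk is w. -/
open RegularExpression

/-! Pair each edge of the walk with the position of `R'` read along it: this is a binding walk,
i.e. a binding trail except that pairs may repeat. If a pair `(e, α)` occurs twice, cut out
everything between the two occurrences. The edge sequence is still a walk, since both
occurrences traverse the same edge `e`, and the position word is still in `L(R')`, since in a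
linear expression what may follow a position `α` does not depend on what precedes it
(`Linear.splice`). The cut walk is strictly shorter, contradicting minimality. -/

namespace List

variable {α : Type*}

theorem append_cons_eq_append_iff {u v x y : List α} {a : α} :
    u ++ a :: v = x ++ y ↔
      (∃ v₁, x = u ++ a :: v₁ ∧ v = v₁ ++ y) ∨ (∃ u₁, y = u₁ ++ a :: v ∧ u = x ++ u₁) := by
  constructor
  · intro h
    rcases append_eq_append_iff.mp h with ⟨as, rfl, h'⟩ | ⟨bs, rfl, rfl⟩
    · rcases cons_eq_append_iff.mp h' with ⟨rfl, rfl⟩ | ⟨v₁, rfl, rfl⟩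
      · exact Or.inr ⟨[], rfl, by simp⟩
      · exact Or.inl ⟨v₁, rfl, rfl⟩
    · exact Or.inr ⟨bs, rfl, rfl⟩
  · rintro (⟨v₁, rfl, rfl⟩ | ⟨u₁, rfl, rfl⟩) <;> simp

theorem flatten_eq_append_cons {S : List (List α)} {u v : List α} {a : α}
    (h : S.flatten = u ++ a :: v) :
    ∃ S₁ x y S₂, S = S₁ ++ (x ++ a :: y) :: S₂ ∧ u = S₁.flatten ++ x ∧ v = y ++ S₂.flatten := by
  induction S generalizing u with
  | nil => simp at h
  | cons z S ih =>
    rcases append_cons_eq_append_iff.mp (flatten_cons ▸ h).symm with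
      ⟨y, rfl, rfl⟩ | ⟨u₁, hS, rfl⟩
    · exact ⟨[], u, y, S, by simp, by simp, rfl⟩
    · obtain ⟨S₁, x, y, S₂, rfl, rfl, rfl⟩ := ih hS
      exact ⟨z :: S₁, x, y, S₂, rfl, by simp, rfl⟩

theorem exists_eq_append_cons_append_cons_of_not_nodup {l : List α} (h : ¬l.Nodup) :
    ∃ x l₁ l₂ l₃, l = l₁ ++ x :: l₂ ++ x :: l₃ := by
  obtain ⟨x, hx⟩ : ∃ x, [x, x] <+ l := by simpa [nodup_iff_sublist] using h
  obtain ⟨r₁, r₂, rfl, hr₁, hr₂⟩ := cons_sublist_iff.mp hx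
  obtain ⟨l₁, l₂, rfl⟩ := append_of_mem hr₁
  obtain ⟨l₂', l₃, rfl⟩ := append_of_mem (singleton_sublist.mp hr₂)
  exact ⟨x, l₁, l₂ ++ l₂', l₃, by simp⟩

theorem Forall₂.exists_map_fst_map_snd {β : Type*} {R : α → β → Prop} {a : List α} {b : List β}
    (h : Forall₂ R a b) :
    ∃ l : List (α × β), l.map Prod.fst = a ∧ l.map Prod.snd = b ∧ ∀ p ∈ l, R p.1 p.2 :=
  ⟨a.zip b, map_fst_zip h.length_eq.le, map_snd_zip h.length_eq.ge,
    fun _ hp => forall₂_zip h hp⟩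

end List

section Linear

variable {Γ : Type} [DecidableEq Γ]

theorem charCount_pos_of_mem {R : RegularExpression Γ} {w : List Γ} {α : Γ}
    (hw : w ∈ R.matches') (hα : α ∈ w) : 0 < charCount α R := by
  induction R generalizing w with
  | zero => exact hw.elim
  | epsilon => cases (show w = [] from hw); simp at hα
  | char c =>
    cases (show w = [c] from hw)
    simp_all [charCount]
  | plus p q ihp ihq =>
    rcases hw with hw | hw
    · exact Nat.add_pos_left (ihp hw hα) _
    · exact Nat.add_pos_right _ (ihq hw hα)
  | comp p q ihp ihq =>
    obtain ⟨x, hx, y, hy, rfl⟩ := Language.mem_mul.mp hw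
    rcases List.mem_append.mp hα with hα | hα
    · exact Nat.add_pos_left (ihp hx hα) _
    · exact Nat.add_pos_right _ (ihq hy hα)
  | star p ih =>
    obtain ⟨S, rfl, hS⟩ := Language.mem_kstar.mp hw
    obtain ⟨y, hy, hαy⟩ := List.mem_flatten.mp hα
    exact ih (hS y hy) hαy

theorem notMem_of_charCount_add_le_one {p q : RegularExpression Γ} {α : Γ} {x y : List Γ}
    (h : charCount α p + charCount α q ≤ 1) (hx : x ∈ p.matches') (hαx : α ∈ x)
    (hy : y ∈ q.matches') : α ∉ y := fun hαy => by
  have := charCount_pos_of_mem hx hαx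
  have := charCount_pos_of_mem hy hαy
  omega

theorem Linear.of_plus {p q : RegularExpression Γ} (h : Linear (plus p q)) :
    Linear p ∧ Linear q :=
  ⟨fun γ => le_of_add_le_left (h γ), fun γ => le_of_add_le_right (h γ)⟩

theorem Linear.of_comp {p q : RegularExpression Γ} (h : Linear (comp p q)) :
    Linear p ∧ Linear q :=
  ⟨fun γ => le_of_add_le_left (h γ), fun γ => le_of_add_le_right (h γ)⟩

theorem Linear.of_star {p : RegularExpression Γ} (h : Linear (star p)) : Linear p := h

theorem Linear.splice {R : RegularExpression Γ} (hR : Linear R) {α : Γ} {u v u' v' : List Γ}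
    (h : u ++ α :: v ∈ R.matches') (h' : u' ++ α :: v' ∈ R.matches') :
    u ++ α :: v' ∈ R.matches' := by
  induction R generalizing u v u' v' with
  | zero => exact h.elim
  | epsilon => simp at h
  | char c =>
    have h : u ++ α :: v = [c] := h
    have h' : u' ++ α :: v' = [c] := h'
    show u ++ α :: v' = [c]
    simp only [List.append_eq_singleton_iff, List.cons.injEq, reduceCtorEq, and_false,
      or_false] at h h'
    simp [h.1, h.2.1, h'.2.2]
  | plus p q ihp ihq =>
    obtain ⟨hp, hq⟩ := hR.of_plus
    rcases h with h | h <;> rcases h' with h' | h'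
    · exact Or.inl (ihp hp h h')
    · exact absurd (by simp) (notMem_of_charCount_add_le_one (hR α) h (by simp) h')
    · exact absurd (by simp) (notMem_of_charCount_add_le_one (hR α) h' (by simp) h)
    · exact Or.inr (ihq hq h h')
  | comp p q ihp ihq =>
    obtain ⟨hp, hq⟩ := hR.of_comp
    obtain ⟨x, hx, y, hy, hxy⟩ := Language.mem_mul.mp h
    obtain ⟨x', hx', y', hy', hxy'⟩ := Language.mem_mul.mp h'
    rcases List.append_cons_eq_append_iff.mp hxy.symm with ⟨v₁, rfl, rfl⟩ | ⟨u₁, rfl, rfl⟩ <;>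
      rcases List.append_cons_eq_append_iff.mp hxy'.symm with ⟨v₁', rfl, rfl⟩ | ⟨u₁', rfl, rfl⟩
    · exact Language.mem_mul.mpr ⟨_, ihp hp hx hx', y', hy', by simp⟩
    · exact absurd (by simp) (notMem_of_charCount_add_le_one (hR α) hx (by simp) hy')
    · exact absurd (by simp) (notMem_of_charCount_add_le_one (hR α) hx' (by simp) hy)
    · exact Language.mem_mul.mpr ⟨x, hx, _, ihq hq hy hy', by simp⟩
  | star p ih =>
    obtain ⟨S, hS, hSp⟩ := Language.mem_kstar.mp h
    obtain ⟨T, hT, hTp⟩ := Language.mem_kstar.mp h'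
    obtain ⟨S₁, x, y, S₂, rfl, rfl, rfl⟩ := List.flatten_eq_append_cons hS.symm
    obtain ⟨T₁, x', y', T₂, rfl, rfl, rfl⟩ := List.flatten_eq_append_cons hT.symm
    have hxy' : x ++ α :: y' ∈ p.matches' :=
      ih hR.of_star (hSp (x ++ α :: y) (by simp)) (hTp (x' ++ α :: y') (by simp))
    refine Language.mem_kstar.mpr ⟨S₁ ++ (x ++ α :: y') :: T₂, by simp, fun z hz => ?_⟩
    simp only [List.mem_append, List.mem_cons] at hz
    rcases hz with hz | rfl | hz
    · exact hSp z (by simp [hz])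
    · exact hxy'
    · exact hTp z (by simp [hz])

theorem Linear.cut {R : RegularExpression Γ} (hR : Linear R) {α : Γ} {u v w : List Γ}
    (h : u ++ α :: v ++ α :: w ∈ R.matches') :
    u ++ α :: w ∈ R.matches' :=
  hR.splice (by simpa using h) h

end Linear

namespace GraphDB

variable {σ V E : Type} {D : GraphDB σ V E}

theorem isWalkFrom_cons_iff_s12 {v t : V} {e : E} {es : List E} :
    D.IsWalkFrom v (e :: es) t ↔ D.src e = v ∧ D.IsWalkFrom (D.tgt e) es t := by
  constructor
  · rintro (_ | ⟨hsrc, rfl, hw⟩)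
    exact ⟨hsrc, hw⟩
  · rintro ⟨hsrc, hw⟩
    exact .cons hsrc rfl hw

theorem isWalkFrom_append_iff {s t : V} {xs ys : List E} :
    D.IsWalkFrom s (xs ++ ys) t ↔ ∃ m, D.IsWalkFrom s xs m ∧ D.IsWalkFrom m ys t := by
  induction xs generalizing s with
  | nil =>
    refine ⟨fun h => ⟨s, .nil s, h⟩, ?_⟩
    rintro ⟨m, (_ | _), h⟩
    exact h
  | cons e xs ih =>
    simp only [List.cons_append, isWalkFrom_cons_iff_s12, ih]
    exact ⟨fun ⟨hsrc, m, h₁, h₂⟩ => ⟨m, ⟨hsrc, h₁⟩, h₂⟩,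
      fun ⟨m, ⟨hsrc, h₁⟩, h₂⟩ => ⟨hsrc, m, h₁, h₂⟩⟩

theorem IsWalkFrom.cut {s t : V} {p₁ p₂ p₃ : List E} {e : E}
    (h : D.IsWalkFrom s (p₁ ++ e :: p₂ ++ e :: p₃) t) : D.IsWalkFrom s (p₁ ++ e :: p₃) t := by
  obtain ⟨m, h₁₂, h₃⟩ := isWalkFrom_append_iff.mp h
  obtain ⟨m', h₁, h₂⟩ := isWalkFrom_append_iff.mp h₁₂
  obtain ⟨rfl, -⟩ := isWalkFrom_cons_iff_s12.mp h₂
  obtain ⟨rfl, -⟩ := isWalkFrom_cons_iff_s12.mp h₃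
  exact isWalkFrom_append_iff.mpr ⟨_, h₁, h₃⟩

end GraphDB

def BindingWalk {σ V E Γ : Type} (D : GraphDB σ V E) (bar : Γ → σ)
    (R' : RegularExpression Γ) (s : V) (l : List (E × Γ)) (t : V) : Prop :=
  D.IsWalkFrom s (l.map Prod.fst) t ∧
  (∀ p ∈ l, bar p.2 ∈ D.lbl p.1) ∧
  (l.map Prod.snd) ∈ R'.matches'

namespace BindingWalk

variable {σ V E Γ : Type} {D : GraphDB σ V E} {bar : Γ → σ} {R' : RegularExpression Γ}
  {s t : V}

theorem exists_of_walkLabel {es : List E} {g : List Γ} (hw : D.IsWalkFrom s es t)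
    (hlbl : D.WalkLabel es (g.map bar)) (hg : g ∈ R'.matches') :
    ∃ l, BindingWalk D bar R' s l t ∧ l.map Prod.fst = es := by
  have hflip : List.Forall₂ (fun e γ => bar γ ∈ D.lbl e) es g :=
    (List.forall₂_map_left_iff.mp hlbl).flip
  obtain ⟨l, rfl, rfl, hl⟩ := hflip.exists_map_fst_map_snd
  exact ⟨l, ⟨hw, hl, hg⟩, rfl⟩

theorem walkLabel {l : List (E × Γ)} (hl : BindingWalk D bar R' s l t) :
    ∃ w, D.WalkLabel (l.map Prod.fst) w ∧ w ∈ (R'.map bar).matches' := by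
  refine ⟨(l.map Prod.snd).map bar, ?_, ?_⟩
  · rw [GraphDB.WalkLabel, List.map_map, List.forall₂_map_left_iff, List.forall₂_map_right_iff,
      List.forall₂_same]
    exact hl.2.1
  · rw [matches'_map]
    exact ⟨_, hl.2.2, rfl⟩

theorem cut [DecidableEq Γ] (hR : Linear R') {l₁ l₂ l₃ : List (E × Γ)} {x : E × Γ}
    (h : BindingWalk D bar R' s (l₁ ++ x :: l₂ ++ x :: l₃) t) :
    BindingWalk D bar R' s (l₁ ++ x :: l₃) t := by
  obtain ⟨hw, hlbl, hm⟩ := h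
  simp only [List.map_append, List.map_cons] at hw hm
  refine ⟨?_, fun p hp => hlbl p ?_, ?_⟩
  · simpa only [List.map_append, List.map_cons] using hw.cut
  · simp only [List.mem_append, List.mem_cons] at hp ⊢
    tauto
  · simpa only [List.map_append, List.map_cons] using hR.cut hm

theorem nodup_of_forall_length_le [DecidableEq Γ] (hR : Linear R') {l : List (E × Γ)}
    (hl : BindingWalk D bar R' s l t)
    (hmin : ∀ l', BindingWalk D bar R' s l' t → l.length ≤ l'.length) : l.Nodup := by
  by_contra hnd
  obtain ⟨x, l₁, l₂, l₃, rfl⟩ := List.exists_eq_append_cons_append_cons_of_not_nodup hnd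
  have := hmin _ (hl.cut hR)
  simp only [List.length_append, List.length_cons] at this
  omega

end BindingWalk

/-- any walk from `s` to `t` of minimal length among those whose
label set meets `L(R)` is the underlying walk of a binding trail matching `R`. -/
theorem stmt_12 {σ V E Γ : Type} [DecidableEq Γ] (D : GraphDB σ V E)
    (bar : Γ → σ) (R' : RegularExpression Γ) (hlin : Linear R')
    (s t : V) (es : List E)
    (hw : D.IsWalkFrom s es t)
    (hm : ∃ w : List σ, D.WalkLabel es w ∧ w ∈ (R'.map bar).matches')
    (hmin : ∀ es' : List E, D.IsWalkFrom s es' t →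
      (∃ w : List σ, D.WalkLabel es' w ∧ w ∈ (R'.map bar).matches') →
      es.length ≤ es'.length) :
    ∃ l : List (E × Γ), BindingTrail D bar R' s l t ∧ l.map Prod.fst = es := by
  obtain ⟨_, hlbl, hg⟩ := hm
  rw [matches'_map] at hg
  obtain ⟨g, hg, rfl⟩ := hg
  obtain ⟨l, hl, rfl⟩ := BindingWalk.exists_of_walkLabel hw hlbl hg
  have hnd : l.Nodup := hl.nodup_of_forall_length_le hlin fun l' hl' => by
    simpa using hmin _ hl'.1 hl'.walkLabel
  exact ⟨l, ⟨hl.1, hl.2.1, hl.2.2, hnd⟩, rfl⟩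
end

section
/- Let R be a regular expression in which no union and no concatenation occurs under a Kleene star (so every starred subexpression is, up to nesting of stars and ε, a single atom or star thereof). Then deleting all stars nested inside another star and deleting every occurrence of ε appearing inside a star yields an expression R'' with Gl(R) = Gl(R''), i.e., the Glushkov automata of R and R'' are equal. -/
open RegularExpression

/-- Allowed bodies of starred subexpressions when no union and no concatenation
occurs under a star: an atom or `ε`, up to nesting of stars. -/
inductive SimpleBody {Γ : Type} : RegularExpression Γ → Prop
  | eps : SimpleBody 1
  | char (γ : Γ) : SimpleBody (RegularExpression.char γ)
  | star {x : RegularExpression Γ} : SimpleBody x → SimpleBody x.star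

/-- No union and no concatenation occurs under a Kleene star. -/
def NoUnionConcatUnderStar {Γ : Type} : RegularExpression Γ → Prop
  | RegularExpression.zero => True
  | RegularExpression.epsilon => True
  | RegularExpression.char _ => True
  | RegularExpression.plus p q => NoUnionConcatUnderStar p ∧ NoUnionConcatUnderStar q
  | RegularExpression.comp p q => NoUnionConcatUnderStar p ∧ NoUnionConcatUnderStar q
  | RegularExpression.star p => SimpleBody p

/-- The unique atom (if any) under a nest of stars. -/
def atomOf {Γ : Type} : RegularExpression Γ → Option Γ
  | RegularExpression.char γ => some γ
  | RegularExpression.star x => atomOf x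
  | _ => none

/-- Deleting all stars nested inside another star and every occurrence of `ε`
appearing inside a star. -/
def normStar {Γ : Type} : RegularExpression Γ → RegularExpression Γ
  | RegularExpression.plus p q => normStar p + normStar q
  | RegularExpression.comp p q => normStar p * normStar q
  | RegularExpression.star p =>
      match atomOf p with
      | some γ => (RegularExpression.char γ).star
      | none => 1
  | x => x

lemma simpleBody_matches {Γ : Type} {x : RegularExpression Γ} (hx : SimpleBody x) :
    (normStar x.star).matches' = x.star.matches' := by
  induction hx with
  | eps =>
      show ((1 : RegularExpression Γ)).matches' = _
      rw [matches'_star, matches'_epsilon, kstar_one]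
  | char γ => rfl
  | star hx ih =>
      rename_i x
      have h1 : normStar x.star.star = normStar x.star := rfl
      rw [h1, ih, matches'_star, matches'_star, matches'_star, kstar_idem]

lemma normStar_matches {Γ : Type} (R : RegularExpression Γ)
    (h : NoUnionConcatUnderStar R) : (normStar R).matches' = R.matches' := by
  induction R with
  | zero => rfl
  | epsilon => rfl
  | char γ => rfl
  | plus p q ihp ihq =>
      obtain ⟨hp, hq⟩ := h
      show (normStar p).matches' + (normStar q).matches' = p.matches' + q.matches'
      rw [ihp hp, ihq hq]
  | comp p q ihp ihq =>
      obtain ⟨hp, hq⟩ := h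
      show (normStar p).matches' * (normStar q).matches' = p.matches' * q.matches'
      rw [ihp hp, ihq hq]
  | star p ih => exact simpleBody_matches h

/-- for an expression with no union and no concatenation under a
star, the simplification preserves the Glushkov automaton. -/
theorem stmt_16 {σ Γ : Type} [DecidableEq Γ] (bar : Γ → σ)
    (R' : RegularExpression Γ) (hlin : Linear R')
    (h : NoUnionConcatUnderStar R') :
    GlDelta bar (normStar R') = GlDelta bar R' ∧
    GlFinal (normStar R') = GlFinal R' := by
  have hm := normStar_matches R' h
  constructor <;> simp only [GlDelta, GlFinal, hm]
end
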